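/- For every nonzero complex number q with |q| < 1, Σ_{m≥1} Σ_{n≥1} (−1)^{m−1} q^{2mn} (q^{m−1} + q^{−m}) / ((1+q^{2n−1})(1−q^{2m−1})) = q ( Σ_{n≥1} q^{n−1}/(1+q^{2n−1}) )^2. -/

import Mathlib

/-!
In indices `m, n ≥ 0`, `q^m + q^(-m-1) = q^(-m-1) (1 + q^(2m+1))` turns the summand into
`theta2Summand q m n`. Put `T n = lambertTail q n = ∑_{k ≥ n} q^k / (1 + q^(2k+1))`.
Expanding `1 / (1 - q^(2m+1))` as a geometric series and summing over `m` first turns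
`∑_m (-1)^m x^(m+1) q^((2m+1)j) / (1 - q^(2m+1))` into `∑_k x q^(k+j) / (1 + x q^(2(k+j)))`.
With `x = q^(2n+1)` and `j = 0, 1`, the sum over `m` for fixed `n` is therefore
`q^(n+1) (T n + T (n+1)) / (1 + q^(2n+1)) = q (T n ^ 2 - T (n+1) ^ 2)`, and the sum over `n`
telescopes to `q (T 0)^2`.
-/

open Filter Topology Function

theorem hasSum_sub_succ_of_tendsto_zero {G : Type*} [AddCommGroup G] [TopologicalSpace G]
    [IsTopologicalAddGroup G] [T2Space G] {g : ℕ → G} (hs : Summable fun n ↦ g n - g (n + 1))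
    (hg : Tendsto g atTop (𝓝 0)) : HasSum (fun n ↦ g n - g (n + 1)) (g 0) := by
  rw [hs.hasSum_iff_tendsto_nat]
  simpa only [Finset.sum_range_sub', sub_zero] using (tendsto_const_nhds (x := g 0)).sub hg

theorem summable_uncurry_of_norm_le_geometric {E : Type*} [NormedAddCommGroup E]
    [CompleteSpace E] {f : ℕ → ℕ → E} {C a b : ℝ} (ha₀ : 0 ≤ a) (ha : a < 1) (hb₀ : 0 ≤ b)
    (hb : b < 1) (hf : ∀ m n, ‖f m n‖ ≤ C * a ^ m * b ^ n) : Summable (uncurry f) := by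
  have hg := ((summable_geometric_of_lt_one ha₀ ha).mul_of_nonneg
    (summable_geometric_of_lt_one hb₀ hb) (fun _ ↦ by positivity) fun _ ↦ by positivity).mul_left C
  exact hg.of_norm_bounded fun p ↦ (hf p.1 p.2).trans_eq (mul_assoc _ _ _)

section NormedDivisionRing

variable {𝕜 : Type*} [NormedDivisionRing 𝕜]

theorem norm_inv_one_sub_le {w : 𝕜} {r : ℝ} (hw : ‖w‖ ≤ r) (hr : r < 1) :
    ‖(1 - w)⁻¹‖ ≤ (1 - r)⁻¹ := by
  have h := norm_sub_norm_le (1 : 𝕜) w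
  rw [norm_one] at h
  rw [norm_inv]
  exact inv_anti₀ (by linarith) (by linarith)

theorem norm_inv_one_add_le {w : 𝕜} {r : ℝ} (hw : ‖w‖ ≤ r) (hr : r < 1) :
    ‖(1 + w)⁻¹‖ ≤ (1 - r)⁻¹ := by
  simpa using norm_inv_one_sub_le (w := -w) (by rwa [norm_neg]) hr

theorem norm_pow_odd_le {q : 𝕜} (hq : ‖q‖ ≤ 1) (k : ℕ) : ‖q ^ (2 * k + 1)‖ ≤ ‖q‖ := by
  rw [norm_pow]
  exact pow_le_of_le_one (norm_nonneg q) hq (by omega)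

end NormedDivisionRing

namespace Theta2

variable {𝕜 : Type*} [NormedField 𝕜] {q x : 𝕜}

def lambertTerm (q : 𝕜) (n : ℕ) : 𝕜 := q ^ n / (1 + q ^ (2 * n + 1))

noncomputable def lambertTail (q : 𝕜) (n : ℕ) : 𝕜 := ∑' k, lambertTerm q (k + n)

theorem norm_lambertTerm_le (hq : ‖q‖ < 1) (n : ℕ) :
    ‖lambertTerm q n‖ ≤ (1 - ‖q‖)⁻¹ * ‖q‖ ^ n := by
  rw [lambertTerm, div_eq_mul_inv, norm_mul, norm_pow, mul_comm]
  exact mul_le_mul_of_nonneg_right (norm_inv_one_add_le (norm_pow_odd_le hq.le n) hq)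
    (by positivity)

theorem summable_lambertTerm [CompleteSpace 𝕜] (hq : ‖q‖ < 1) : Summable (lambertTerm q) :=
  .of_norm_bounded ((summable_geometric_of_lt_one (norm_nonneg q) hq).mul_left _)
    (norm_lambertTerm_le hq)

theorem lambertTail_eq_add [CompleteSpace 𝕜] (hq : ‖q‖ < 1) (n : ℕ) :
    lambertTail q n = lambertTerm q n + lambertTail q (n + 1) := by
  have h : Summable fun k ↦ lambertTerm q (k + n) :=
    (summable_nat_add_iff n).2 (summable_lambertTerm hq)
  rw [lambertTail, h.tsum_eq_zero_add, zero_add, lambertTail]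
  simp only [add_right_comm _ 1 n, add_assoc]

theorem tendsto_lambertTail (q : 𝕜) : Tendsto (lambertTail q) atTop (𝓝 0) :=
  tendsto_sum_nat_add (lambertTerm q)

theorem hasSum_lambert [CompleteSpace 𝕜] (hq : ‖q‖ < 1) (hx : ‖x‖ < 1) (j : ℕ) :
    HasSum (fun m : ℕ ↦ (-1) ^ m * x ^ (m + 1) * q ^ ((2 * m + 1) * j) / (1 - q ^ (2 * m + 1)))
      (∑' k : ℕ, x * q ^ (k + j) / (1 + x * q ^ (2 * (k + j)))) := by
  set f : ℕ → ℕ → 𝕜 := fun m k ↦ (-1) ^ m * x ^ (m + 1) * q ^ ((2 * m + 1) * (k + j))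
  have hf : Summable (uncurry f) := by
    refine summable_uncurry_of_norm_le_geometric (C := 1) (norm_nonneg x) hx (norm_nonneg q) hq
      fun m k ↦ ?_
    simp only [f, norm_mul, norm_pow, norm_neg, norm_one, one_pow, one_mul]
    exact mul_le_mul (pow_le_pow_of_le_one (norm_nonneg x) hx.le (by omega))
      (pow_le_pow_of_le_one (norm_nonneg q) hq.le (by nlinarith)) (by positivity) (by positivity)
  have hrow : ∀ m, HasSum (f m)
      ((-1) ^ m * x ^ (m + 1) * q ^ ((2 * m + 1) * j) / (1 - q ^ (2 * m + 1))) := by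
    intro m
    have hy : ‖q ^ (2 * m + 1)‖ < 1 := (norm_pow_odd_le hq.le m).trans_lt hq
    have hfm : f m = fun k ↦
        (-1) ^ m * x ^ (m + 1) * q ^ ((2 * m + 1) * j) * (q ^ (2 * m + 1)) ^ k :=
      funext fun k ↦ by ring
    rw [hfm, div_eq_mul_inv]
    exact (hasSum_geometric_of_norm_lt_one hy).mul_left _
  have hcol : ∀ k, HasSum (fun m ↦ f m k) (x * q ^ (k + j) / (1 + x * q ^ (2 * (k + j)))) := by
    intro k
    have hy : ‖-(x * q ^ (2 * (k + j)))‖ < 1 := by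
      rw [norm_neg, norm_mul, norm_pow]
      exact mul_lt_one_of_nonneg_of_lt_one_left (norm_nonneg x) hx
        (pow_le_one₀ (norm_nonneg q) hq.le)
    have hfk : (fun m ↦ f m k) = fun m ↦ x * q ^ (k + j) * (-(x * q ^ (2 * (k + j)))) ^ m :=
      funext fun m ↦ by ring
    rw [hfk, div_eq_mul_inv, ← sub_neg_eq_add]
    exact (hasSum_geometric_of_norm_lt_one hy).mul_left _
  have hcols := ((Equiv.prodComm ℕ ℕ).hasSum_iff.2 hf.hasSum).prod_fiberwise hcol
  rw [hcols.tsum_eq]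
  exact hf.hasSum.prod_fiberwise hrow

theorem hasSum_lambert_pow_odd [CompleteSpace 𝕜] (hq : ‖q‖ < 1) (n j : ℕ) :
    HasSum (fun m : ℕ ↦ (-1) ^ m * (q ^ (2 * n + 1)) ^ (m + 1) * q ^ ((2 * m + 1) * j)
        / (1 - q ^ (2 * m + 1)))
      (q ^ (n + 1) * lambertTail q (n + j)) := by
  convert hasSum_lambert hq ((norm_pow_odd_le hq.le n).trans_lt hq) j using 1
  rw [lambertTail, ← tsum_mul_left]
  exact tsum_congr fun k ↦ by rw [lambertTerm]; ring

def theta2Summand (q : 𝕜) (m n : ℕ) : 𝕜 :=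
  (-1) ^ m * q ^ ((2 * n + 1) * (m + 1)) * (1 + q ^ (2 * m + 1))
    / ((1 + q ^ (2 * n + 1)) * (1 - q ^ (2 * m + 1)))

theorem theta2Summand_eq_zpow (q : 𝕜) (m n : ℕ) :
    theta2Summand q m n =
      (-1 : 𝕜) ^ m * q ^ (2 * (m + 1) * (n + 1))
        * (q ^ (((m : ℤ) + 1) - 1) + q ^ (-((m : ℤ) + 1)))
        / ((1 + q ^ (2 * (n + 1) - 1)) * (1 - q ^ (2 * (m + 1) - 1))) := by
  rcases eq_or_ne q 0 with rfl | hq0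
  · simp [theta2Summand]
  rw [add_sub_cancel_right, ← Nat.cast_add_one, zpow_neg, zpow_natCast, zpow_natCast,
    show 2 * (n + 1) - 1 = 2 * n + 1 by omega, show 2 * (m + 1) - 1 = 2 * m + 1 by omega,
    theta2Summand]
  congr 1
  field_simp
  ring

theorem norm_theta2Summand_le (hq : ‖q‖ < 1) (m n : ℕ) :
    ‖theta2Summand q m n‖ ≤ 2 * (1 - ‖q‖)⁻¹ ^ 2 * ‖q‖ ^ m * ‖q‖ ^ n := by
  have hpow : ‖q‖ ^ ((2 * n + 1) * (m + 1)) ≤ ‖q‖ ^ m * ‖q‖ ^ n := by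
    rw [← pow_add]
    exact pow_le_pow_of_le_one (norm_nonneg q) hq.le (by nlinarith)
  have hnum : ‖1 + q ^ (2 * m + 1)‖ ≤ 2 := by
    have := norm_pow_odd_le hq.le m
    calc ‖1 + q ^ (2 * m + 1)‖ ≤ ‖(1 : 𝕜)‖ + ‖q ^ (2 * m + 1)‖ := norm_add_le _ _
      _ ≤ 2 := by rw [norm_one]; linarith
  have hden₁ := norm_inv_one_add_le (norm_pow_odd_le hq.le n) hq
  have hden₂ := norm_inv_one_sub_le (norm_pow_odd_le hq.le m) hq
  rw [theta2Summand, div_eq_mul_inv, mul_inv]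
  simp only [norm_mul, norm_pow, norm_neg, norm_one, one_pow, one_mul]
  calc _ ≤ ‖q‖ ^ m * ‖q‖ ^ n * 2 * ((1 - ‖q‖)⁻¹ * (1 - ‖q‖)⁻¹) := by gcongr
    _ = _ := by ring

theorem hasSum_theta2Summand [CompleteSpace 𝕜] (hq : ‖q‖ < 1) (n : ℕ) :
    HasSum (fun m ↦ theta2Summand q m n)
      (q * (lambertTail q n ^ 2 - lambertTail q (n + 1) ^ 2)) := by
  have h := ((hasSum_lambert_pow_odd hq n 0).add (hasSum_lambert_pow_odd hq n 1)).mul_left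
    (1 + q ^ (2 * n + 1))⁻¹
  have hval : q * (lambertTail q n ^ 2 - lambertTail q (n + 1) ^ 2) =
      (1 + q ^ (2 * n + 1))⁻¹ *
        (q ^ (n + 1) * lambertTail q (n + 0) + q ^ (n + 1) * lambertTail q (n + 1)) := by
    rw [add_zero, lambertTail_eq_add hq n, lambertTerm]
    ring
  rw [hval]
  exact h.congr_fun fun m ↦ by rw [theta2Summand, div_eq_mul_inv, mul_inv]; ring

end Theta2

open Theta2

theorem theta2_square_identity_general (q : ℂ) (hq : ‖q‖ < 1) :
    ∑' m : ℕ, ∑' n : ℕ,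
        (-1 : ℂ) ^ m * q ^ (2 * (m + 1) * (n + 1))
          * (q ^ (((m : ℤ) + 1) - 1) + q ^ (-((m : ℤ) + 1)))
          / ((1 + q ^ (2 * (n + 1) - 1)) * (1 - q ^ (2 * (m + 1) - 1)))
    = q * (∑' n : ℕ, q ^ ((n + 1) - 1) / (1 + q ^ (2 * (n + 1) - 1))) ^ 2 := by
  simp_rw [← theta2Summand_eq_zpow]
  have hsum : Summable (uncurry fun n m ↦ theta2Summand q m n) :=
    summable_uncurry_of_norm_le_geometric (C := 2 * (1 - ‖q‖)⁻¹ ^ 2) (norm_nonneg q) hq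
      (norm_nonneg q) hq fun n m ↦ (norm_theta2Summand_le hq m n).trans_eq (by ring)
  have hcols := hsum.hasSum.prod_fiberwise (hasSum_theta2Summand hq)
  simp only [mul_sub] at hcols
  have htel := hasSum_sub_succ_of_tendsto_zero hcols.summable
    (by simpa using ((tendsto_lambertTail q).pow 2).const_mul q)
  rw [hsum.tsum_comm, tsum_congr fun n ↦ (hasSum_theta2Summand hq n).tsum_eq]
  simp only [mul_sub]
  rw [htel.tsum_eq, lambertTail]
  rfl

/-- `Σ_{m,n≥1} (−1)^{m−1} q^{2mn} (q^{m−1} + q^{−m}) / ((1+q^{2n−1})(1−q^{2m−1}))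
      = q ( Σ_{n≥1} q^{n−1}/(1+q^{2n−1}) )^2`,
where `q^{m−1}` and `q^{−m}` are integer powers (`zpow`), legitimate since `q ≠ 0`. -/
theorem theta2_square_identity (q : ℂ) (hq : ‖q‖ < 1) (hq0 : q ≠ 0) :
    ∑' m : ℕ, ∑' n : ℕ,
        (-1 : ℂ) ^ m * q ^ (2 * (m + 1) * (n + 1))
          * (q ^ (((m : ℤ) + 1) - 1) + q ^ (-((m : ℤ) + 1)))
          / ((1 + q ^ (2 * (n + 1) - 1)) * (1 - q ^ (2 * (m + 1) - 1)))
    = q * (∑' n : ℕ, q ^ ((n + 1) - 1) / (1 + q ^ (2 * (n + 1) - 1))) ^ 2 :=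
  theta2_square_identity_general q hq
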